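/- Let G=(V,E) be a weighted locally finite graph and let Ω⊂V be a bounded domain with Ω°≠∅ and ∂Ω≠∅. Let m∈ℕ and p∈[1,∞). Then there exists a constant C_{m,p}>0, depending only on m, p and Ω, such that ‖u‖_{L^q(Ω)} ≤ C_{m,p} ‖∇^m u‖_{L^p(Ω)} for all q∈[1,∞] and all u∈W^{m,p}_0(Ω). -/

import Mathlib

open scoped BigOperators NNReal

/-- A weighted locally finite (non-oriented) graph on the vertex set `V`:
a symmetric non-negative weight `w` such that every vertex belongs to finitely
many edges (`xy ∈ E` iff `w x y > 0`). -/
structure WLFG (V : Type*) where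
  w : V → V → ℝ
  symm : ∀ x y, w x y = w y x
  nonneg : ∀ x y, 0 ≤ w x y
  locFin : ∀ x, {y | w x y ≠ 0}.Finite

namespace WLFG

variable {V : Type*} (G : WLFG V)

/-- The edge (adjacency) relation: `x ∼ y` iff `w x y > 0`. -/
def Adj (x y : V) : Prop := 0 < G.w x y

/-- The measure `𝔪(x) = ∑_{y ∈ V} w x y`. -/
noncomputable def mes (x : V) : ℝ := ∑ᶠ y, G.w x y

/-- `∫_A u d𝔪 = ∑_{x ∈ A} u x * 𝔪 x`. -/
noncomputable def integral (A : Set V) (u : V → ℝ) : ℝ := ∑ᶠ x ∈ A, u x * G.mes x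

/-- The vertex boundary `∂Ω = {x ∈ Ω : ∃ y ∉ Ω, xy ∈ E}`. -/
def bdry (Ω : Set V) : Set V := {x | x ∈ Ω ∧ ∃ y, y ∉ Ω ∧ G.Adj x y}

/-- The vertex interior `Ω° = Ω \ ∂Ω`. -/
def intr (Ω : Set V) : Set V := Ω \ G.bdry Ω

/-- `Ω` is connected as a subgraph: any two of its vertices are joined by a
path inside `Ω`. -/
def ConnectedIn (Ω : Set V) : Prop :=
  ∀ x ∈ Ω, ∀ y ∈ Ω, Relation.ReflTransGen (fun a b => a ∈ Ω ∧ b ∈ Ω ∧ G.Adj a b) x y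

/-- A bounded domain: a connected subgraph, bounded with respect to the vertex
path distance; for a locally finite graph this means connected and finite. -/
def IsBoundedDomain (Ω : Set V) : Prop := G.ConnectedIn Ω ∧ Ω.Finite

/-- The graph Laplacian `Δu(x) = (1/𝔪(x)) ∑_y w_{xy}(u(y) - u(x))`. -/
noncomputable def lap (u : V → ℝ) (x : V) : ℝ :=
  (1 / G.mes x) * ∑ᶠ y, G.w x y * (u y - u x)

/-- The gradient form `Γ(u,v)(x) = (1/(2𝔪(x))) ∑_y w_{xy}(u(y)-u(x))(v(y)-v(x))`. -/
noncomputable def gamma (u v : V → ℝ) (x : V) : ℝ :=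
  (1 / (2 * G.mes x)) * ∑ᶠ y, G.w x y * (u y - u x) * (v y - v x)

/-- The slope `|∇u|(x) = √(Γ(u,u)(x))`. -/
noncomputable def slope (u : V → ℝ) (x : V) : ℝ := Real.sqrt (G.gamma u u x)

/-- The `k`-slope: `|∇^k u| = |∇(Δ^{(k-1)/2} u)|` for `k` odd and `|Δ^{k/2} u|`
for `k` even. -/
noncomputable def mslope (k : ℕ) (u : V → ℝ) (x : V) : ℝ :=
  if k % 2 = 1 then G.slope ((G.lap)^[(k - 1) / 2] u) x
  else |(G.lap)^[k / 2] u x|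

/-- The `L^p(Ω)` norm `(∑_{x ∈ Ω} |u x|^p 𝔪 x)^(1/p)` for a real exponent `p`. -/
noncomputable def lpNorm (Ω : Set V) (p : ℝ) (u : V → ℝ) : ℝ :=
  (∑ᶠ x ∈ Ω, |u x| ^ p * G.mes x) ^ (1 / p)

/-- The `L^∞(Ω)` norm `max_{x ∈ Ω} |u x|`. -/
noncomputable def linfNorm (_G : WLFG V) (Ω : Set V) (u : V → ℝ) : ℝ :=
  sSup ((fun x => |u x|) '' Ω)

/-- The `W^{m,p}_0(Ω)` norm `‖∇^m u‖_{L^p(Ω)}`. -/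
noncomputable def wNorm (Ω : Set V) (k : ℕ) (p : ℝ) (u : V → ℝ) : ℝ :=
  G.lpNorm Ω p (G.mslope k u)

/-- Membership in `W^{m,p}_0(Ω)`: `|∇^j u| = 0` on `∂Ω` for all `0 ≤ j ≤ m-1`. -/
def MemW0 (Ω : Set V) (k : ℕ) (u : V → ℝ) : Prop :=
  ∀ j < k, ∀ x ∈ G.bdry Ω, G.mslope j u x = 0

/-- The `p`-Laplacian
`Δ_p u(x) = (1/𝔪(x)) ∑_{y ∈ Ω} (|∇u|^{p-2}(y) + |∇u|^{p-2}(x)) w_{xy} (u(y)-u(x))`. -/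
noncomputable def plap (Ω : Set V) (p : ℝ) (u : V → ℝ) (x : V) : ℝ :=
  (1 / G.mes x) *
    ∑ᶠ y ∈ Ω, (G.slope u y ^ (p - 2) + G.slope u x ^ (p - 2)) * G.w x y * (u y - u x)

/-- The distributional pairing `∫_Ω L_{m,p} u · φ d𝔪` defining the
`(m,p)`-Laplacian. -/
noncomputable def mpPairing (Ω : Set V) (k : ℕ) (p : ℝ) (u φ : V → ℝ) : ℝ :=
  if k % 2 = 1 then
    ∑ᶠ x ∈ Ω, G.mslope k u x ^ (p - 2) *
      G.gamma ((G.lap)^[(k - 1) / 2] u) ((G.lap)^[(k - 1) / 2] φ) x * G.mes x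
  else
    ∑ᶠ x ∈ Ω, G.mslope k u x ^ (p - 2) *
      ((G.lap)^[k / 2] u x) * ((G.lap)^[k / 2] φ x) * G.mes x

/-- `u ∈ W^{m,p}_0(Ω)` solves `L_{m,p} u = g` in `Ω°` (together with the
boundary conditions `|∇^j u| = 0` on `∂Ω`, `0 ≤ j ≤ m-1`), where the
`(m,p)`-Laplacian is defined in the distributional sense. -/
def IsMPSolution (Ω : Set V) (k : ℕ) (p : ℝ) (u g : V → ℝ) : Prop :=
  G.MemW0 Ω k u ∧
  ∃ L : V → ℝ,
    (∀ φ : V → ℝ, G.MemW0 Ω k φ →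
      G.mpPairing Ω k p u φ = G.integral Ω (fun x => L x * φ x)) ∧
    ∀ x ∈ G.intr Ω, L x = g x

end WLFG

/-! Since `Ω` is finite and every vertex of `Ω` has positive measure, `‖∇^m u‖_{L^p(Ω)}` controls
`max_Ω |∇^m u|`, and `max_Ω |u|` controls every `‖u‖_{L^q(Ω)}` uniformly in `q ≥ 1`. So it suffices
to bound `max_Ω |u|` by `max_Ω |∇^m u|`, one order at a time; the boundary conditions make every
`Δ^j u` with `2j < m` vanish on `∂Ω`. A function vanishing on `∂Ω` is bounded by its slope, by
summing along a path to a boundary vertex, and by its Laplacian on `Ω°`: by the maximum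
principle the Dirichlet Laplacian of `Ω°` is injective, hence has a bounded inverse on the
finite-dimensional space `Ω° → ℝ`. -/

open Finset

lemma Real.rpow_le_max_one {a t : ℝ} (ha : 0 ≤ a) (ht₀ : 0 ≤ t) (ht₁ : t ≤ 1) :
    a ^ t ≤ max 1 a := by
  rcases le_total a 1 with h | h
  · exact (Real.rpow_le_one ha h ht₀).trans (le_max_left _ _)
  · exact (Real.rpow_le_self_of_one_le h ht₁).trans (le_max_right _ _)

namespace WLFG

variable {V : Type*} (G : WLFG V)

noncomputable def nbr (x : V) : Finset V := (G.locFin x).toFinset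

@[simp]
lemma mem_nbr {x y : V} : y ∈ G.nbr x ↔ G.w x y ≠ 0 := by
  simp [nbr]

lemma finsum_eq_sum_nbr {x : V} {f : V → ℝ} (hf : ∀ y, G.w x y = 0 → f y = 0) :
    ∑ᶠ y, f y = ∑ y ∈ G.nbr x, f y :=
  finsum_eq_sum_of_support_subset f fun y hy => G.mem_nbr.2 fun h => hy (hf y h)

lemma mes_eq_sum (x : V) : G.mes x = ∑ y ∈ G.nbr x, G.w x y :=
  G.finsum_eq_sum_nbr fun _ h => h

lemma lap_eq_sum (u : V → ℝ) (x : V) :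
    G.lap u x = (G.mes x)⁻¹ * ∑ y ∈ G.nbr x, G.w x y * (u y - u x) := by
  rw [lap, one_div, G.finsum_eq_sum_nbr fun y h => by rw [h, zero_mul]]

lemma gamma_eq_sum (u v : V → ℝ) (x : V) :
    G.gamma u v x =
      (2 * G.mes x)⁻¹ * ∑ y ∈ G.nbr x, G.w x y * (u y - u x) * (v y - v x) := by
  rw [gamma, one_div, G.finsum_eq_sum_nbr fun y h => by rw [h, zero_mul, zero_mul]]

lemma mes_nonneg (x : V) : 0 ≤ G.mes x :=
  G.mes_eq_sum x ▸ sum_nonneg fun y _ => G.nonneg x y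

lemma mes_pos_of_adj {x y : V} (h : G.Adj x y) : 0 < G.mes x :=
  G.mes_eq_sum x ▸ h.trans_le (single_le_sum (fun z _ => G.nonneg x z) (G.mem_nbr.2 h.ne'))

lemma abs_sub_le_slope {x y : V} (h : G.Adj x y) (u : V → ℝ) :
    |u y - u x| ≤ √(2 * G.mes x / G.w x y) * G.slope u x := by
  have hx := G.mes_pos_of_adj h
  have hsq : G.w x y * (u y - u x) ^ 2 ≤ 2 * G.mes x * G.gamma u u x := by
    rw [gamma_eq_sum, ← mul_assoc, mul_inv_cancel₀ (by positivity), one_mul, sq, ← mul_assoc]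
    exact single_le_sum (f := fun z => G.w x z * (u z - u x) * (u z - u x))
      (fun z _ => mul_assoc (G.w x z) _ _ ▸ mul_nonneg (G.nonneg x z) (mul_self_nonneg _))
      (G.mem_nbr.2 h.ne')
  rw [slope, ← Real.sqrt_mul (div_nonneg (by positivity) h.le), ← Real.sqrt_sq_eq_abs]
  refine Real.sqrt_le_sqrt ?_
  rw [div_mul_eq_mul_div, le_div_iff₀ h]
  linarith

noncomputable def lapLinearMap : (V → ℝ) →ₗ[ℝ] V → ℝ where
  toFun := G.lap
  map_add' u v := funext fun x => by
    simp only [lap_eq_sum, Pi.add_apply, ← mul_add, ← sum_add_distrib]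
    congr 1
    exact sum_congr rfl fun _ _ => by ring
  map_smul' c u := funext fun x => by
    simp only [lap_eq_sum, Pi.smul_apply, smul_eq_mul, RingHom.id_apply]
    rw [mul_left_comm c]
    congr 1
    rw [mul_sum]
    exact sum_congr rfl fun _ _ => by ring

lemma lap_neg (u : V → ℝ) (x : V) : G.lap (-u) x = -G.lap u x :=
  congrFun (G.lapLinearMap.map_neg u) x

lemma lap_congr {u v : V → ℝ} {x : V} (hx : u x = v x) (h : ∀ y, G.w x y ≠ 0 → u y = v y) :
    G.lap u x = G.lap v x := by
  simp only [lap_eq_sum, hx]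
  congr 1
  exact sum_congr rfl fun y hy => by rw [h y (G.mem_nbr.1 hy)]

variable {Ω : Set V}

lemma exists_abs_sub_le_of_reflTransGen {x b : V}
    (h : Relation.ReflTransGen (fun a b => a ∈ Ω ∧ b ∈ Ω ∧ G.Adj a b) x b) :
    ∃ c, 0 ≤ c ∧ ∀ (v : V → ℝ) (M : ℝ), 0 ≤ M → (∀ z ∈ Ω, G.slope v z ≤ M) →
      |v b - v x| ≤ c * M := by
  induction h using Relation.ReflTransGen.head_induction_on with
  | refl => exact ⟨0, le_rfl, fun v M _ _ => by simp⟩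
  | @head a a' hstep _ ih =>
    obtain ⟨c, hc, hcv⟩ := ih
    obtain ⟨ha, -, hadj⟩ := hstep
    refine ⟨c + √(2 * G.mes a / G.w a a'), by positivity, fun v M hM hsl => ?_⟩
    calc |v b - v a| ≤ |v b - v a'| + |v a' - v a| := abs_sub_le _ _ _
      _ ≤ c * M + √(2 * G.mes a / G.w a a') * M := by
        gcongr
        · exact hcv v M hM hsl
        · exact (G.abs_sub_le_slope hadj v).trans (by gcongr; exact hsl a ha)
      _ = (c + √(2 * G.mes a / G.w a a')) * M := by ring

theorem exists_abs_le_of_slope_le (hΩ : G.IsBoundedDomain Ω) (hbd : (G.bdry Ω).Nonempty) :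
    ∃ C, 0 < C ∧ ∀ (v : V → ℝ) (M : ℝ), 0 ≤ M → (∀ z ∈ Ω, G.slope v z ≤ M) →
      (∀ z ∈ G.bdry Ω, v z = 0) → ∀ x ∈ Ω, |v x| ≤ C * M := by
  obtain ⟨b, hb⟩ := hbd
  choose! c _ hc using fun x (hx : x ∈ Ω) =>
    G.exists_abs_sub_le_of_reflTransGen (hΩ.1 x hx b hb.1)
  obtain ⟨B, hB⟩ := (hΩ.2.image c).bddAbove
  refine ⟨max B 1, by positivity, fun v M hM hsl hv0 x hx => ?_⟩
  calc |v x| = |v b - v x| := by rw [hv0 b hb, zero_sub, abs_neg]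
    _ ≤ c x * M := hc x hx v M hM hsl
    _ ≤ max B 1 * M := by
      gcongr
      exact (hB ⟨x, hx, rfl⟩).trans (le_max_left _ _)

lemma mem_of_mem_intr_of_w_ne_zero {x y : V} (hx : x ∈ G.intr Ω) (hxy : G.w x y ≠ 0) : y ∈ Ω :=
  by_contra fun hy => hx.2 ⟨hx.1, y, hy, (G.nonneg x y).lt_of_ne' hxy⟩

lemma mem_bdry_of_notMem_intr {x : V} (hx : x ∈ Ω) (hxi : x ∉ G.intr Ω) : x ∈ G.bdry Ω :=
  by_contra fun h => hxi ⟨hx, h⟩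

lemma eq_of_adj_of_lap_eq_zero {v : V → ℝ} {x y : V} (hlap : G.lap v x = 0)
    (hmax : ∀ z, G.w x z ≠ 0 → v z ≤ v x) (hxy : G.Adj x y) : v y = v x := by
  have hsum : ∑ z ∈ G.nbr x, G.w x z * (v z - v x) = 0 := by
    rw [lap_eq_sum, mul_eq_zero, inv_eq_zero] at hlap
    exact hlap.resolve_left (G.mes_pos_of_adj hxy).ne'
  have hterm := (sum_eq_zero_iff_of_nonpos fun z hz =>
    mul_nonpos_of_nonneg_of_nonpos (G.nonneg x z) (sub_nonpos.2 (hmax z (G.mem_nbr.1 hz)))).1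
    hsum y (G.mem_nbr.2 hxy.ne')
  linarith [(mul_eq_zero.1 hterm).resolve_left hxy.ne']

lemma nonpos_of_lap_eq_zero (hΩ : G.IsBoundedDomain Ω) (hbd : (G.bdry Ω).Nonempty)
    {v : V → ℝ} (hv0 : ∀ x ∉ G.intr Ω, v x = 0) (hlap : ∀ x ∈ G.intr Ω, G.lap v x = 0) :
    ∀ x ∈ Ω, v x ≤ 0 := by
  obtain ⟨b, hb⟩ := hbd
  obtain ⟨x₀, hx₀, hmax⟩ := Set.exists_max_image Ω v hΩ.2 ⟨b, hb.1⟩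
  suffices v x₀ ≤ 0 from fun x hx => (hmax x hx).trans this
  by_contra! hpos
  have hconst : ∀ y, Relation.ReflTransGen (fun a b => a ∈ Ω ∧ b ∈ Ω ∧ G.Adj a b) x₀ y →
      v y = v x₀ := by
    intro y h
    induction h with
    | refl => rfl
    | @tail a a' _ hstep ih =>
      obtain ⟨ha, -, hadj⟩ := hstep
      have hai : a ∈ G.intr Ω := by
        by_contra h
        linarith [hv0 a h]
      rw [← ih]
      exact G.eq_of_adj_of_lap_eq_zero (hlap a hai)
        (fun z hz => ih ▸ hmax z (G.mem_of_mem_intr_of_w_ne_zero hai hz)) hadj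
  have hb₀ := hconst b (hΩ.1 x₀ hx₀ b hb.1)
  rw [hv0 b fun h => h.2 hb] at hb₀
  linarith

lemma eq_zero_of_lap_eq_zero (hΩ : G.IsBoundedDomain Ω) (hbd : (G.bdry Ω).Nonempty)
    {v : V → ℝ} (hv0 : ∀ x ∉ G.intr Ω, v x = 0) (hlap : ∀ x ∈ G.intr Ω, G.lap v x = 0)
    (x : V) : v x = 0 := by
  by_cases hx : x ∈ G.intr Ω
  · have hle := G.nonpos_of_lap_eq_zero hΩ hbd hv0 hlap x hx.1
    have hge := G.nonpos_of_lap_eq_zero hΩ hbd (v := -v)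
      (fun y hy => by simp [hv0 y hy]) (fun y hy => by simp [lap_neg, hlap y hy]) x hx.1
    linarith [show -v x ≤ 0 from hge]
  · exact hv0 x hx

variable (Ω) in
noncomputable def dirichletLap : (G.intr Ω → ℝ) →ₗ[ℝ] G.intr Ω → ℝ :=
  LinearMap.funLeft ℝ ℝ Subtype.val ∘ₗ G.lapLinearMap ∘ₗ
    Function.ExtendByZero.linearMap ℝ Subtype.val

lemma dirichletLap_apply (f : G.intr Ω → ℝ) (z : G.intr Ω) :
    G.dirichletLap Ω f z = G.lap (Function.extend Subtype.val f 0) z :=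
  rfl

lemma dirichletLap_injective (hΩ : G.IsBoundedDomain Ω) (hbd : (G.bdry Ω).Nonempty) :
    Function.Injective (G.dirichletLap Ω) := by
  rw [injective_iff_map_eq_zero]
  intro f hf
  have hv0 : ∀ x ∉ G.intr Ω, Function.extend Subtype.val f 0 x = 0 := fun x hx =>
    Function.extend_apply' _ _ _ fun ⟨z, hz⟩ => hx (hz ▸ z.2)
  have hlap : ∀ x (hx : x ∈ G.intr Ω), G.lap (Function.extend Subtype.val f 0) x = 0 :=
    fun x hx => by rw [← G.dirichletLap_apply f ⟨x, hx⟩, hf, Pi.zero_apply]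
  funext z
  rw [← Subtype.val_injective.extend_apply f 0 z]
  exact G.eq_zero_of_lap_eq_zero hΩ hbd hv0 hlap z

lemma dirichletLap_restrict_apply {v : V → ℝ} (hv0 : ∀ x ∈ G.bdry Ω, v x = 0) (z : G.intr Ω) :
    G.dirichletLap Ω (fun y => v y) z = G.lap v z := by
  have hext : ∀ x ∈ Ω, Function.extend Subtype.val (fun y : G.intr Ω => v y) 0 x = v x := by
    intro x hx
    by_cases hxi : x ∈ G.intr Ω
    · exact Subtype.val_injective.extend_apply _ (0 : V → ℝ) ⟨x, hxi⟩
    · rw [Function.extend_apply' _ (0 : V → ℝ) x fun ⟨y, hy⟩ => hxi (hy ▸ y.2),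
        hv0 x (G.mem_bdry_of_notMem_intr hx hxi), Pi.zero_apply]
  exact G.lap_congr (hext z z.2.1) fun y hy => hext y (G.mem_of_mem_intr_of_w_ne_zero z.2 hy)

theorem exists_abs_le_of_lap_le (hΩ : G.IsBoundedDomain Ω) (hbd : (G.bdry Ω).Nonempty) :
    ∃ C, 0 < C ∧ ∀ (v : V → ℝ) (M : ℝ), 0 ≤ M → (∀ z ∈ G.intr Ω, |G.lap v z| ≤ M) →
      (∀ z ∈ G.bdry Ω, v z = 0) → ∀ x ∈ Ω, |v x| ≤ C * M := by
  have : Fintype (G.intr Ω) := (hΩ.2.subset Set.sdiff_subset).fintype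
  obtain ⟨K, hK, hanti⟩ :=
    (G.dirichletLap Ω).injective_iff_antilipschitz.1 (G.dirichletLap_injective hΩ hbd)
  refine ⟨K, hK, fun v M hM hlap hv0 x hx => ?_⟩
  by_cases hxi : x ∈ G.intr Ω
  · set f : G.intr Ω → ℝ := fun y => v y
    have hLf : ‖G.dirichletLap Ω f‖ ≤ M := (pi_norm_le_iff_of_nonneg hM).2 fun z => by
      rw [Real.norm_eq_abs, G.dirichletLap_restrict_apply hv0]
      exact hlap z z.2
    calc |v x| = ‖f ⟨x, hxi⟩‖ := (Real.norm_eq_abs _).symm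
      _ ≤ ‖f‖ := norm_le_pi_norm f _
      _ ≤ K * ‖G.dirichletLap Ω f‖ := by simpa using hanti.le_mul_dist f 0
      _ ≤ K * M := by gcongr
  · rw [hv0 x (G.mem_bdry_of_notMem_intr hx hxi), abs_zero]
    positivity

lemma mslope_two_mul (j : ℕ) (u : V → ℝ) (x : V) :
    G.mslope (2 * j) u x = |(G.lap)^[j] u x| := by
  simp [mslope]

lemma mslope_two_mul_add_one (j : ℕ) (u : V → ℝ) (x : V) :
    G.mslope (2 * j + 1) u x = G.slope ((G.lap)^[j] u) x := by
  simp [mslope]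

lemma mslope_nonneg (k : ℕ) (u : V → ℝ) (x : V) : 0 ≤ G.mslope k u x := by
  unfold mslope
  split_ifs
  exacts [Real.sqrt_nonneg _, abs_nonneg _]

variable {G} in
lemma MemW0.mono {k l : ℕ} {u : V → ℝ} (hu : G.MemW0 Ω k u) (hlk : l ≤ k) : G.MemW0 Ω l u :=
  fun j hj => hu j (hj.trans_le hlk)

variable {G} in
lemma MemW0.iterate_lap_eq_zero {k j : ℕ} {u : V → ℝ} (hu : G.MemW0 Ω k u) (hj : 2 * j < k) :
    ∀ x ∈ G.bdry Ω, (G.lap)^[j] u x = 0 := fun x hx =>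
  abs_eq_zero.1 ((G.mslope_two_mul j u x).symm.trans (hu _ hj x hx))

theorem exists_abs_le_of_iterate_lap_le (hΩ : G.IsBoundedDomain Ω)
    (hbd : (G.bdry Ω).Nonempty) (j : ℕ) :
    ∃ C, 0 < C ∧ ∀ (u : V → ℝ) (M : ℝ), 0 ≤ M → G.MemW0 Ω (2 * j) u →
      (∀ z ∈ Ω, |(G.lap)^[j] u z| ≤ M) → ∀ x ∈ Ω, |u x| ≤ C * M := by
  induction j with
  | zero => exact ⟨1, one_pos, fun u M _ _ hu x hx => by simpa using hu x hx⟩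
  | succ j ih =>
    obtain ⟨C₀, hC₀, hC₀u⟩ := ih
    obtain ⟨C₁, hC₁, hC₁v⟩ := G.exists_abs_le_of_lap_le hΩ hbd
    refine ⟨C₀ * C₁, by positivity, fun u M hM hu hlap x hx => ?_⟩
    have hv : ∀ z ∈ Ω, |(G.lap)^[j] u z| ≤ C₁ * M :=
      hC₁v _ M hM (fun z hz => Function.iterate_succ_apply' G.lap j u ▸ hlap z hz.1)
        (hu.iterate_lap_eq_zero (by omega))
    calc |u x| ≤ C₀ * (C₁ * M) := hC₀u u _ (by positivity) (hu.mono (by omega)) hv x hx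
      _ = C₀ * C₁ * M := by ring

theorem exists_abs_le_of_mslope_le (hΩ : G.IsBoundedDomain Ω) (hbd : (G.bdry Ω).Nonempty)
    (m : ℕ) :
    ∃ C, 0 < C ∧ ∀ (u : V → ℝ) (M : ℝ), 0 ≤ M → G.MemW0 Ω m u →
      (∀ z ∈ Ω, G.mslope m u z ≤ M) → ∀ x ∈ Ω, |u x| ≤ C * M := by
  obtain ⟨j, rfl | rfl⟩ := Nat.even_or_odd' m
  · obtain ⟨C, hC, hCu⟩ := G.exists_abs_le_of_iterate_lap_le hΩ hbd j
    exact ⟨C, hC, fun u M hM hu hsl =>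
      hCu u M hM hu fun z hz => G.mslope_two_mul j u z ▸ hsl z hz⟩
  · obtain ⟨C₀, hC₀, hC₀u⟩ := G.exists_abs_le_of_iterate_lap_le hΩ hbd j
    obtain ⟨C₁, hC₁, hC₁v⟩ := G.exists_abs_le_of_slope_le hΩ hbd
    refine ⟨C₀ * C₁, by positivity, fun u M hM hu hsl x hx => ?_⟩
    have hv : ∀ z ∈ Ω, |(G.lap)^[j] u z| ≤ C₁ * M :=
      hC₁v _ M hM (fun z hz => G.mslope_two_mul_add_one j u z ▸ hsl z hz)
        (hu.iterate_lap_eq_zero (by omega))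
    calc |u x| ≤ C₀ * (C₁ * M) := hC₀u u _ (by positivity) (hu.mono (by omega)) hv x hx
      _ = C₀ * C₁ * M := by ring

lemma mes_pos_of_mem (hΩ : G.ConnectedIn Ω) (hbd : (G.bdry Ω).Nonempty) {x : V}
    (hx : x ∈ Ω) : 0 < G.mes x := by
  obtain ⟨b, hb⟩ := hbd
  by_cases hxb : x = b
  · obtain ⟨-, y, -, hadj⟩ := hxb ▸ hb
    exact G.mes_pos_of_adj hadj
  · obtain ⟨y, ⟨-, -, hadj⟩, -⟩ :=
      (Relation.ReflTransGen.cases_head (hΩ x hx b hb.1)).resolve_left hxb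
    exact G.mes_pos_of_adj hadj

lemma lpNorm_nonneg (Ω : Set V) (p : ℝ) (u : V → ℝ) : 0 ≤ G.lpNorm Ω p u :=
  Real.rpow_nonneg (finsum_nonneg fun x => finsum_nonneg fun _ =>
    mul_nonneg (Real.rpow_nonneg (abs_nonneg _) _) (G.mes_nonneg x)) _

lemma lpNorm_eq_sum (hΩ : Ω.Finite) (p : ℝ) (u : V → ℝ) :
    G.lpNorm Ω p u = (∑ x ∈ hΩ.toFinset, |u x| ^ p * G.mes x) ^ (1 / p) := by
  rw [lpNorm, finsum_mem_eq_finite_toFinset_sum _ hΩ]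

lemma abs_mul_rpow_mes_le_lpNorm (hΩ : Ω.Finite) {p : ℝ} (hp : 0 < p) (u : V → ℝ) {x : V}
    (hx : x ∈ Ω) : |u x| * G.mes x ^ (1 / p) ≤ G.lpNorm Ω p u := by
  have hterm : |u x| ^ p * G.mes x ≤ ∑ y ∈ hΩ.toFinset, |u y| ^ p * G.mes y :=
    single_le_sum (fun y _ => mul_nonneg (Real.rpow_nonneg (abs_nonneg _) _) (G.mes_nonneg y))
      (hΩ.mem_toFinset.2 hx)
  rw [G.lpNorm_eq_sum hΩ]
  calc |u x| * G.mes x ^ (1 / p) = (|u x| ^ p * G.mes x) ^ (1 / p) := by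
        rw [Real.mul_rpow (by positivity) (G.mes_nonneg x), one_div,
          Real.rpow_rpow_inv (abs_nonneg _) hp.ne']
    _ ≤ _ := by
      gcongr
      exact mul_nonneg (by positivity) (G.mes_nonneg x)

lemma lpNorm_le_of_abs_le (hΩ : Ω.Finite) {q K : ℝ} (hq : 0 < q) (hK : 0 ≤ K) {u : V → ℝ}
    (hu : ∀ x ∈ Ω, |u x| ≤ K) :
    G.lpNorm Ω q u ≤ K * (∑ x ∈ hΩ.toFinset, G.mes x) ^ (1 / q) := by
  have hsum : ∑ x ∈ hΩ.toFinset, |u x| ^ q * G.mes x ≤ K ^ q * ∑ x ∈ hΩ.toFinset, G.mes x := by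
    rw [mul_sum]
    gcongr with x hx
    · exact G.mes_nonneg x
    · exact hu x (hΩ.mem_toFinset.1 hx)
  have hmes : 0 ≤ ∑ x ∈ hΩ.toFinset, G.mes x := sum_nonneg fun x _ => G.mes_nonneg x
  rw [G.lpNorm_eq_sum hΩ]
  calc _ ≤ (K ^ q * ∑ x ∈ hΩ.toFinset, G.mes x) ^ (1 / q) := by
        gcongr
        exact sum_nonneg fun x _ => mul_nonneg (by positivity) (G.mes_nonneg x)
    _ = _ := by rw [Real.mul_rpow (by positivity) hmes, one_div, Real.rpow_rpow_inv hK hq.ne']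

theorem exists_abs_le_lpNorm_mslope (hΩ : G.IsBoundedDomain Ω) (hbd : (G.bdry Ω).Nonempty)
    (m : ℕ) {p : ℝ} (hp : 0 < p) :
    ∃ C, 0 < C ∧ ∀ u : V → ℝ, G.MemW0 Ω m u →
      ∀ x ∈ Ω, |u x| ≤ C * G.lpNorm Ω p (G.mslope m u) := by
  obtain ⟨A, hA, hAu⟩ := G.exists_abs_le_of_mslope_le hΩ hbd m
  obtain ⟨B, hB⟩ := (hΩ.2.image fun x => (G.mes x ^ (1 / p))⁻¹).bddAbove
  refine ⟨A * max B 1, by positivity, fun u hu x hx => ?_⟩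
  set R := G.lpNorm Ω p (G.mslope m u)
  have hR := G.lpNorm_nonneg Ω p (G.mslope m u)
  have hsl : ∀ z ∈ Ω, G.mslope m u z ≤ max B 1 * R := by
    intro z hz
    have hmes : 0 < G.mes z ^ (1 / p) := by have := G.mes_pos_of_mem hΩ.1 hbd hz; positivity
    have hz' := G.abs_mul_rpow_mes_le_lpNorm hΩ.2 hp (G.mslope m u) hz
    rw [abs_of_nonneg (G.mslope_nonneg m u z)] at hz'
    calc G.mslope m u z ≤ (G.mes z ^ (1 / p))⁻¹ * R := by
          rwa [inv_mul_eq_div, le_div_iff₀ hmes]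
      _ ≤ max B 1 * R := by
          gcongr
          exact (hB ⟨z, hz, rfl⟩).trans (le_max_left _ _)
  calc |u x| ≤ A * (max B 1 * R) := hAu u _ (by positivity) hu hsl x hx
    _ = A * max B 1 * R := by ring

end WLFG

theorem sobolev_embedding_general {V : Type*} (G : WLFG V) (Ω : Set V)
    (hΩ : G.IsBoundedDomain Ω) (hbd : (G.bdry Ω).Nonempty)
    (m : ℕ) (p : ℝ) (hp : 1 ≤ p) :
    ∃ C : ℝ, 0 < C ∧ ∀ u : V → ℝ, G.MemW0 Ω m u →
      (∀ q : ℝ, 1 ≤ q → G.lpNorm Ω q u ≤ C * G.lpNorm Ω p (G.mslope m u)) ∧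
      G.linfNorm Ω u ≤ C * G.lpNorm Ω p (G.mslope m u) := by
  obtain ⟨A, hA, hAu⟩ := G.exists_abs_le_lpNorm_mslope hΩ hbd m (one_pos.trans_le hp)
  set T := ∑ x ∈ hΩ.2.toFinset, G.mes x
  have hT : 0 ≤ T := sum_nonneg fun x _ => G.mes_nonneg x
  refine ⟨A * max 1 T, by positivity, fun u hu => ?_⟩
  set R := G.lpNorm Ω p (G.mslope m u)
  have hAR : 0 ≤ A * R := mul_nonneg hA.le (G.lpNorm_nonneg Ω p _)
  have hAR_le : A * R ≤ A * max 1 T * R := by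
    rw [mul_right_comm]
    exact le_mul_of_one_le_right hAR (le_max_left _ _)
  refine ⟨fun q hq => ?_, Real.sSup_le ?_ (hAR.trans hAR_le)⟩
  · have hq₀ : 0 < q := one_pos.trans_le hq
    calc G.lpNorm Ω q u ≤ A * R * T ^ (1 / q) := G.lpNorm_le_of_abs_le hΩ.2 hq₀ hAR (hAu u hu)
      _ ≤ A * R * max 1 T := by
        gcongr
        exact Real.rpow_le_max_one hT (by positivity) ((div_le_one hq₀).2 hq)
      _ = A * max 1 T * R := by ring
  · rintro _ ⟨x, hx, rfl⟩
    exact (hAu u hu x hx).trans hAR_le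

/-- Theorem 2.1, Sobolev embedding: there is a constant
`C_{m,p} > 0` such that `‖u‖_{L^q(Ω)} ≤ C_{m,p} ‖∇^m u‖_{L^p(Ω)}` for all
`q ∈ [1,∞]` and all `u ∈ W^{m,p}_0(Ω)`. -/
theorem sobolev_embedding {V : Type*} (G : WLFG V) (Ω : Set V)
    (hΩ : G.IsBoundedDomain Ω) (hint : (G.intr Ω).Nonempty) (hbd : (G.bdry Ω).Nonempty)
    (m : ℕ) (hm : 1 ≤ m) (p : ℝ) (hp : 1 ≤ p) :
    ∃ C : ℝ, 0 < C ∧ ∀ u : V → ℝ, G.MemW0 Ω m u →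
      (∀ q : ℝ, 1 ≤ q → G.lpNorm Ω q u ≤ C * G.lpNorm Ω p (G.mslope m u)) ∧
      G.linfNorm Ω u ≤ C * G.lpNorm Ω p (G.mslope m u) :=
  sobolev_embedding_general G Ω hΩ hbd m p hp
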